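/- arXiv:math/0609655 — 2 statements merged into one kernel-verified Lean document; each statement's English description precedes it below -/
import Mathlib

section
/- Let I be a fine normal ideal on κ and θ ≤ κ a regular uncountable cardinal. Suppose there is a family D of I-positive subsets of κ such that: (dense) every I-positive set has a subset belonging to D, and (<θ-closed) for every ordinal δ < θ and every ⊆-decreasing sequence (D_ε)_{ε<δ} of members of D there is a member of D contained in every D_ε. Then nonempty has a winning strategy in the Banach–Mazur game BM_{<θ}(I,S) for every I-positive set S ⊆ κ, and consequently nonempty has a winning strategy in the pressing down game PD_{<θ}(NS,S), where NS is the nonstationary ideal on κ. -/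
open Set

noncomputable section

namespace BMPDGames

/-- `I` is an ideal on the (regular uncountable) ordinal `κ`:  a collection of subsets of
`κ` containing all singletons, closed under subsets and finite unions, with `κ ∉ I`. -/
def IsIdealOn (κ : Ordinal) (I : Set (Set Ordinal)) : Prop :=
  (∀ A ∈ I, A ⊆ Set.Iio κ) ∧
  (∀ β < κ, ({β} : Set Ordinal) ∈ I) ∧
  (∀ A B : Set Ordinal, A ⊆ B → B ∈ I → A ∈ I) ∧
  (∀ A ∈ I, ∀ B ∈ I, A ∪ B ∈ I) ∧
  Set.Iio κ ∉ I

/-- `I` is fine: every bounded subset of `κ` belongs to `I`. -/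
def IsFineIdeal (κ : Ordinal) (I : Set (Set Ordinal)) : Prop :=
  ∀ A : Set Ordinal, A ⊆ Set.Iio κ → (∃ β < κ, A ⊆ Set.Iio β) → A ∈ I

/-- `I` is normal: the diagonal union of `κ` many members of `I` belongs to `I`. -/
def IsNormalIdeal (κ : Ordinal) (I : Set (Set Ordinal)) : Prop :=
  ∀ A : Ordinal → Set Ordinal, (∀ γ, γ < κ → A γ ∈ I) →
    {β : Ordinal | β < κ ∧ ∃ γ < β, β ∈ A γ} ∈ I

/-- `I` is a fine normal ideal on `κ`. -/
def FineNormalIdeal (κ : Ordinal) (I : Set (Set Ordinal)) : Prop :=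
  IsIdealOn κ I ∧ IsFineIdeal κ I ∧ IsNormalIdeal κ I

/-- `κ` is (as an ordinal) a regular uncountable cardinal. -/
def RegUncountable (κ : Ordinal) : Prop :=
  κ.card.IsRegular ∧ Cardinal.aleph0 < κ.card ∧ κ.card.ord = κ

/-- `C` is a club (closed unbounded) subset of `κ`: it is closed under suprema of its
bounded nonempty subsets and unbounded in `κ`. -/
def IsClubIn (κ : Ordinal) (C : Set Ordinal) : Prop :=
  C ⊆ Set.Iio κ ∧
  (∀ D : Set Ordinal, D ⊆ C → D.Nonempty → sSup D < κ → sSup D ∈ C) ∧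
  (∀ β, β < κ → ∃ γ ∈ C, β < γ)

/-- `S` is a stationary subset of `κ`: it meets every club. -/
def IsStationaryIn (κ : Ordinal) (S : Set Ordinal) : Prop :=
  S ⊆ Set.Iio κ ∧ ∀ C : Set Ordinal, IsClubIn κ C → (S ∩ C).Nonempty

/-- The nonstationary ideal on `κ`: subsets of `κ` disjoint from some club. -/
def NSIdeal (κ : Ordinal) : Set (Set Ordinal) :=
  {A | A ⊆ Set.Iio κ ∧ ∃ C : Set Ordinal, IsClubIn κ C ∧ A ∩ C = ∅}

/-- `E^κ_ω`, the set of ordinals below `κ` of cofinality `ω`. -/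
def Ecofomega (κ : Ordinal) : Set Ordinal :=
  {α : Ordinal | α < κ ∧ Ordinal.cof α = Cardinal.aleph0}

/-- The intersection of the values `T β` for `β < α`. -/
def InterBelow (T : Ordinal → Set Ordinal) (α : Ordinal) : Set Ordinal :=
  ⋂ β ∈ Set.Iio α, T β

/-! ### The Banach–Mazur game `BM_{<ζ}(I,S)` (empty moves first at every stage).

A strategy for a player is represented as a function giving that player's move at stage `α`
as a function of the opponent's moves (it may only depend on the moves made before the
player's move at stage `α`, which is the first conjunct in each definition below).  A
strategy is winning if it always produces legal moves (as long as the opponent has played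
legally and the game is not yet over) and every run in which the opponent plays legally is
won by the player. -/

/-- `σ` is a winning strategy for the player *empty* in `BM_{<ζ}(I,S)`.
Here `T : Ordinal → Set Ordinal` ranges over the sequences of moves of nonempty, and
empty's move at stage `α` is `σ α T`. Empty wins a run iff at some stage `α < ζ`
the intersection of all moves made before stage `α` belongs to `I`. -/
def EmptyBMStratWins (ζ : Ordinal) (I : Set (Set Ordinal)) (S : Set Ordinal)
    (σ : Ordinal → (Ordinal → Set Ordinal) → Set Ordinal) : Prop :=
  (∀ (α : Ordinal) (T T' : Ordinal → Set Ordinal),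
      (∀ β < α, T β = T' β) → σ α T = σ α T') ∧
  ∀ T : Ordinal → Set Ordinal,
    (∀ α < ζ, (∀ β < α, T β ∉ I ∧ T β ⊆ σ β T) → InterBelow T α ∉ I →
      σ α T ∉ I ∧ σ α T ⊆ S ∧ ∀ β < α, σ α T ⊆ T β) ∧
    ((∀ α < ζ, T α ∉ I ∧ T α ⊆ σ α T) → ∃ α < ζ, InterBelow T α ∈ I)

/-- Empty has a winning strategy in `BM_{<ζ}(I,S)`. -/
def EmptyWinsBM (ζ : Ordinal) (I : Set (Set Ordinal)) (S : Set Ordinal) : Prop :=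
  ∃ σ, EmptyBMStratWins ζ I S σ

/-- Nonempty has a winning strategy in `BM_{<ζ}(I,S)`.
Here `Sq : Ordinal → Set Ordinal` ranges over the sequences of moves of empty, and
nonempty's move at stage `α` is `τ α Sq`.  The strategy must respond legally to legal
play by empty, and guarantee that empty is never stuck, i.e. that the intersection of
all previous moves never lies in `I` at any stage `α < ζ`. -/
def NonemptyWinsBM (ζ : Ordinal) (I : Set (Set Ordinal)) (S : Set Ordinal) : Prop :=
  ∃ τ : Ordinal → (Ordinal → Set Ordinal) → Set Ordinal,
    (∀ (α : Ordinal) (Sq Sq' : Ordinal → Set Ordinal),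
        (∀ β ≤ α, Sq β = Sq' β) → τ α Sq = τ α Sq') ∧
    ∀ Sq : Ordinal → Set Ordinal, ∀ α, α < ζ →
      ((∀ β ≤ α, Sq β ∉ I ∧ Sq β ⊆ S ∧ ∀ γ < β, Sq β ⊆ Sq γ ∩ τ γ Sq) →
        τ α Sq ∉ I ∧ τ α Sq ⊆ Sq α) ∧
      ((∀ β < α, Sq β ∉ I ∧ Sq β ⊆ S ∧ ∀ γ < β, Sq β ⊆ Sq γ ∩ τ γ Sq) →
        InterBelow (fun β => Sq β ∩ τ β Sq) α ∉ I)

/-! ### The variant `BM'_{<ζ}(I,S)` in which nonempty makes the first move at stage `0`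
(playing an `I`-positive `T 0 ⊆ S`), after which play continues as in `BM` with empty
moving first at every later stage. -/

/-- `σ` is a winning strategy for empty in `BM'_{<ζ}(I,S)` (`σ` is only used at
stages `α > 0`, since nonempty alone moves at stage `0`). -/
def EmptyBMPrimeStratWins (ζ : Ordinal) (I : Set (Set Ordinal)) (S : Set Ordinal)
    (σ : Ordinal → (Ordinal → Set Ordinal) → Set Ordinal) : Prop :=
  (∀ (α : Ordinal) (T T' : Ordinal → Set Ordinal),
      (∀ β < α, T β = T' β) → σ α T = σ α T') ∧
  ∀ T : Ordinal → Set Ordinal,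
    (∀ α, 0 < α → α < ζ → (T 0 ∉ I ∧ T 0 ⊆ S) →
      (∀ β, 0 < β → β < α → T β ∉ I ∧ T β ⊆ σ β T) → InterBelow T α ∉ I →
      σ α T ∉ I ∧ ∀ β < α, σ α T ⊆ T β) ∧
    ((0 < ζ → T 0 ∉ I ∧ T 0 ⊆ S) → (∀ α, 0 < α → α < ζ → T α ∉ I ∧ T α ⊆ σ α T) →
      ∃ α < ζ, InterBelow T α ∈ I)

/-- Empty has a winning strategy in `BM'_{<ζ}(I,S)`. -/
def EmptyWinsBMPrime (ζ : Ordinal) (I : Set (Set Ordinal)) (S : Set Ordinal) : Prop :=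
  ∃ σ, EmptyBMPrimeStratWins ζ I S σ

/-- Nonempty has a winning strategy in `BM'_{<ζ}(I,S)`: a first move `T0` (an
`I`-positive subset of `S`, provided the game has any stage at all) together with
responses `τ α Sq` to empty's moves `Sq β` (`0 < β ≤ α`) at all later stages `α`. -/
def NonemptyWinsBMPrime (ζ : Ordinal) (I : Set (Set Ordinal)) (S : Set Ordinal) : Prop :=
  ∃ T0 : Set Ordinal, ∃ τ : Ordinal → (Ordinal → Set Ordinal) → Set Ordinal,
    (0 < ζ → T0 ∉ I ∧ T0 ⊆ S) ∧
    (∀ (α : Ordinal) (Sq Sq' : Ordinal → Set Ordinal),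
        (∀ β ≤ α, Sq β = Sq' β) → τ α Sq = τ α Sq') ∧
    ∀ Sq : Ordinal → Set Ordinal, ∀ α, 0 < α → α < ζ →
      ((∀ β, 0 < β → β ≤ α →
          Sq β ∉ I ∧ Sq β ⊆ T0 ∧ ∀ γ, 0 < γ → γ < β → Sq β ⊆ Sq γ ∩ τ γ Sq) →
        τ α Sq ∉ I ∧ τ α Sq ⊆ Sq α) ∧
      ((∀ β, 0 < β → β < α →
          Sq β ∉ I ∧ Sq β ⊆ T0 ∧ ∀ γ, 0 < γ → γ < β → Sq β ⊆ Sq γ ∩ τ γ Sq) →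
        (T0 ∩ ⋂ β ∈ Set.Ioo (0 : Ordinal) α, (Sq β ∩ τ β Sq)) ∉ I)

/-! ### The pressing down game `PD_{<ζ}(I,S)`.

At each stage `α < ζ` empty plays a regressive function `f_α : κ → κ` and nonempty plays
a set `T_α ⊆ S` contained in all previous `T_β` on which `f_α` is constant.  Empty wins a
run iff `T_α ∈ I` for some `α < ζ`. -/

/-- Empty has a winning strategy in `PD_{<ζ}(I,S)`: a (history-dependent) choice of
regressive functions such that in every run in which nonempty plays legally, some move
of nonempty lies in `I`. -/
def EmptyWinsPD (ζ : Ordinal) (I : Set (Set Ordinal)) (S : Set Ordinal) : Prop :=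
  ∃ σ : Ordinal → (Ordinal → Set Ordinal) → (Ordinal → Ordinal),
    (∀ (α : Ordinal) (T T' : Ordinal → Set Ordinal),
        (∀ β < α, T β = T' β) → σ α T = σ α T') ∧
    (∀ (α : Ordinal) (T : Ordinal → Set Ordinal) (β : Ordinal), 0 < β → σ α T β < β) ∧
    ∀ T : Ordinal → Set Ordinal,
      (∀ α, α < ζ →
        T α ⊆ S ∧ (∀ β < α, T α ⊆ T β) ∧ ∃ c, ∀ x ∈ T α, σ α T x = c) →
      ∃ α, α < ζ ∧ T α ∈ I

/-- Nonempty has a winning strategy in `PD_{<ζ}(I,S)`: responses `τ α g` to the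
sequence `g` of regressive functions played by empty, which are always legal
(homogeneous subsets of `S` and of all previous responses) and never lie in `I`. -/
def NonemptyWinsPD (ζ : Ordinal) (I : Set (Set Ordinal)) (S : Set Ordinal) : Prop :=
  ∃ τ : Ordinal → (Ordinal → (Ordinal → Ordinal)) → Set Ordinal,
    (∀ (α : Ordinal) (g g' : Ordinal → (Ordinal → Ordinal)),
        (∀ β ≤ α, g β = g' β) → τ α g = τ α g') ∧
    ∀ g : Ordinal → (Ordinal → Ordinal), (∀ α β, 0 < β → g α β < β) →
      ∀ α, α < ζ →
        τ α g ⊆ S ∧ (∀ β < α, τ α g ⊆ τ β g) ∧ (∃ c, ∀ x ∈ τ α g, g α x = c) ∧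
        τ α g ∉ I

/-! ### The games of length `ω + 1` on `κ`: `BM_{≤ω}(I,S)` and the ideal game.

In `BM_{≤ω}(I,S)` the players move at the finite stages `n < ω` and empty wins a run iff
`⋂_{n<ω} S_n ∈ I`; in the ideal game (played on `κ` itself) empty wins iff
`⋂_{n<ω} S_n = ∅`. -/

/-- `σ` is a winning strategy for empty in `BM_{≤ω}(I,S)`. -/
def EmptyBMOmegaStratWins (I : Set (Set Ordinal)) (S : Set Ordinal)
    (σ : ℕ → (ℕ → Set Ordinal) → Set Ordinal) : Prop :=
  (∀ (n : ℕ) (T T' : ℕ → Set Ordinal), (∀ m < n, T m = T' m) → σ n T = σ n T') ∧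
  ∀ T : ℕ → Set Ordinal,
    (∀ n, (∀ m < n, T m ∉ I ∧ T m ⊆ σ m T) →
      σ n T ∉ I ∧ σ n T ⊆ S ∧ ∀ m < n, σ n T ⊆ T m) ∧
    ((∀ n, T n ∉ I ∧ T n ⊆ σ n T) → (⋂ n, σ n T) ∈ I)

/-- Empty has a winning strategy in `BM_{≤ω}(I,S)`. -/
def EmptyWinsBMOmega (I : Set (Set Ordinal)) (S : Set Ordinal) : Prop :=
  ∃ σ, EmptyBMOmegaStratWins I S σ

/-- Nonempty has a winning strategy in `BM_{≤ω}(I,S)`. -/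
def NonemptyWinsBMOmega (I : Set (Set Ordinal)) (S : Set Ordinal) : Prop :=
  ∃ τ : ℕ → (ℕ → Set Ordinal) → Set Ordinal,
    (∀ (n : ℕ) (Sq Sq' : ℕ → Set Ordinal), (∀ m ≤ n, Sq m = Sq' m) → τ n Sq = τ n Sq') ∧
    ∀ Sq : ℕ → Set Ordinal,
      (∀ n, (∀ m ≤ n, Sq m ∉ I ∧ Sq m ⊆ S ∧ ∀ k < m, Sq m ⊆ Sq k ∩ τ k Sq) →
        τ n Sq ∉ I ∧ τ n Sq ⊆ Sq n) ∧
      ((∀ n, Sq n ∉ I ∧ Sq n ⊆ S ∧ ∀ k < n, Sq n ⊆ Sq k ∩ τ k Sq) →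
        (⋂ n, Sq n) ∉ I)

/-- Empty has a winning strategy in the ideal game on `I` (played on `κ`). -/
def EmptyWinsIdealGame (κ : Ordinal) (I : Set (Set Ordinal)) : Prop :=
  ∃ σ : ℕ → (ℕ → Set Ordinal) → Set Ordinal,
    (∀ (n : ℕ) (T T' : ℕ → Set Ordinal), (∀ m < n, T m = T' m) → σ n T = σ n T') ∧
    ∀ T : ℕ → Set Ordinal,
      (∀ n, (∀ m < n, T m ∉ I ∧ T m ⊆ σ m T) →
        σ n T ∉ I ∧ σ n T ⊆ Set.Iio κ ∧ ∀ m < n, σ n T ⊆ T m) ∧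
      ((∀ n, T n ∉ I ∧ T n ⊆ σ n T) → (⋂ n, σ n T) = ∅)

/-- Nonempty has a winning strategy in the ideal game on `I` (played on `κ`). -/
def NonemptyWinsIdealGame (κ : Ordinal) (I : Set (Set Ordinal)) : Prop :=
  ∃ τ : ℕ → (ℕ → Set Ordinal) → Set Ordinal,
    (∀ (n : ℕ) (Sq Sq' : ℕ → Set Ordinal), (∀ m ≤ n, Sq m = Sq' m) → τ n Sq = τ n Sq') ∧
    ∀ Sq : ℕ → Set Ordinal,
      (∀ n, (∀ m ≤ n, Sq m ∉ I ∧ Sq m ⊆ Set.Iio κ ∧ ∀ k < m, Sq m ⊆ Sq k ∩ τ k Sq) →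
        τ n Sq ∉ I ∧ τ n Sq ⊆ Sq n) ∧
      ((∀ n, Sq n ∉ I ∧ Sq n ⊆ Set.Iio κ ∧ ∀ k < n, Sq n ⊆ Sq k ∩ τ k Sq) →
        (⋂ n, Sq n).Nonempty)

/-!
Nonempty wins the Banach–Mazur game by always answering with a member of `D` below empty's
move: her answers form a `⊆`-decreasing chain in `D` of length `< θ`, and a member of `D`
below that chain lies inside the intersection of all moves made so far, which is therefore
`I`-positive.

Any winning strategy for nonempty in `BM_{<θ}(I,S)` transfers to `PD_{<θ}(NS,S)`: faced with
a regressive `f_α`, nonempty lets the simulated empty play a homogeneous `I`-positive part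
(Fodor's lemma for the normal ideal `I`) of the intersection of the moves so far, and copies
the answer of her Banach–Mazur strategy. Her moves are `I`-positive, hence stationary since
`NS ⊆ I`.
-/

namespace IsIdealOn

variable {κ : Ordinal} {I : Set (Set Ordinal)} {A B : Set Ordinal}

theorem mem_of_subset (hI : IsIdealOn κ I) (hAB : A ⊆ B) (hB : B ∈ I) : A ∈ I :=
  hI.2.2.1 A B hAB hB

theorem notMem_of_subset (hI : IsIdealOn κ I) (hAB : A ⊆ B) (hA : A ∉ I) : B ∉ I :=
  fun hB => hA (hI.mem_of_subset hAB hB)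

theorem union_mem (hI : IsIdealOn κ I) (hA : A ∈ I) (hB : B ∈ I) : A ∪ B ∈ I :=
  hI.2.2.2.1 A hA B hB

theorem singleton_mem (hI : IsIdealOn κ I) {β : Ordinal} (hβ : β < κ) : {β} ∈ I :=
  hI.2.1 β hβ

end IsIdealOn

theorem RegUncountable.pos {κ : Ordinal} (hκ : RegUncountable κ) : 0 < κ := by
  rw [← hκ.2.2]
  exact Cardinal.ord_pos.2 (Cardinal.aleph0_pos.trans hκ.2.1)

/-- Fodor's lemma for a normal ideal. -/
theorem exists_preimage_singleton_notMem {κ : Ordinal} {I : Set (Set Ordinal)}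
    (hκ : 0 < κ) (hI : IsIdealOn κ I) (hN : IsNormalIdeal κ I) {A : Set Ordinal}
    (hAκ : A ⊆ Iio κ) (hA : A ∉ I) {f : Ordinal → Ordinal} (hf : ∀ β, 0 < β → f β < β) :
    ∃ c, A ∩ f ⁻¹' {c} ∉ I := by
  by_contra! h
  refine hA (hI.mem_of_subset ?_ (hI.union_mem (hN _ fun γ _ => h γ) (hI.singleton_mem hκ)))
  intro x hx
  rcases eq_zero_or_pos x with rfl | hx0
  · exact Or.inr rfl
  · exact Or.inl ⟨hAκ hx, f x, hf x hx0, hx, rfl⟩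

namespace IsClubIn

variable {κ : Ordinal} {C : Set Ordinal}

theorem csInf_Ioi_mem (hC : IsClubIn κ C) {γ : Ordinal} (hγ : γ < κ) :
    sInf (C ∩ Ioi γ) ∈ C ∩ Ioi γ :=
  csInf_mem (hC.2.2 γ hγ)

theorem csInf_Ioi_lt (hC : IsClubIn κ C) {γ : Ordinal} (hγ : γ < κ) : sInf (C ∩ Ioi γ) < κ :=
  hC.1 (hC.csInf_Ioi_mem hγ).1

/-- The witness is `γ = sup (C ∩ x)`. -/
theorem exists_lt_lt_csInf_Ioi (hC : IsClubIn κ C) {x c : Ordinal} (hxκ : x < κ)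
    (hxC : x ∉ C) (hc : c ∈ C) (hcx : c < x) : ∃ γ < κ, γ < x ∧ x < sInf (C ∩ Ioi γ) := by
  have hne : (C ∩ Iio x).Nonempty := ⟨c, hc, hcx⟩
  have hbdd : BddAbove (C ∩ Iio x) := ⟨x, fun a ha => ha.2.le⟩
  set γ := sSup (C ∩ Iio x)
  have hγx : γ ≤ x := csSup_le hne fun a ha => ha.2.le
  have hγκ : γ < κ := hγx.trans_lt hxκ
  have hγC : γ ∈ C := hC.2.1 _ inter_subset_left hne hγκ
  refine ⟨γ, hγκ, hγx.lt_of_ne fun h => hxC (h ▸ hγC), ?_⟩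
  obtain ⟨hnC, hγn⟩ := hC.csInf_Ioi_mem hγκ
  by_contra! hnx
  have hnx : sInf (C ∩ Ioi γ) < x := hnx.lt_of_ne fun h => hxC (h ▸ hnC)
  exact (le_csSup hbdd ⟨hnC, hnx⟩).not_gt hγn

end IsClubIn

/-- Above any point of `C`, a set missing the club `C` is covered by the diagonal union of
the bounded sets `[0, next_C γ)`. -/
theorem nsIdeal_subset {κ : Ordinal} {I : Set (Set Ordinal)} (hκ : 0 < κ)
    (hI : FineNormalIdeal κ I) : NSIdeal κ ⊆ I := by
  rintro A ⟨hAκ, C, hC, hAC⟩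
  obtain ⟨hideal, hfine, hnormal⟩ := hI
  obtain ⟨c, hc, -⟩ := hC.2.2 0 hκ
  have hgaps : {β | β < κ ∧ ∃ γ < β, β ∈ Iio (sInf (C ∩ Ioi γ))} ∈ I :=
    hnormal _ fun γ hγ => hfine _ (fun x hx => hx.trans (hC.csInf_Ioi_lt hγ))
      ⟨_, hC.csInf_Ioi_lt hγ, subset_rfl⟩
  have hlow : A ∩ Iio c ∈ I := hfine _ (fun x hx => hAκ hx.1) ⟨c, hC.1 hc, inter_subset_right⟩
  refine hideal.mem_of_subset (fun x hx => ?_) (hideal.union_mem hgaps hlow)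
  have hxC : x ∉ C := fun hxC => eq_empty_iff_forall_notMem.1 hAC x ⟨hx, hxC⟩
  rcases lt_or_ge x c with hxc | hcx
  · exact Or.inr ⟨hx, hxc⟩
  · obtain ⟨γ, -, hγx, hxγ⟩ :=
      hC.exists_lt_lt_csInf_Ioi (hAκ hx) hxC hc (hcx.lt_of_ne fun h => hxC (h ▸ hc))
    exact Or.inl ⟨hAκ hx, γ, hγx, hxγ⟩

theorem nonemptyWinsBM_of_dense_of_closed {κ θ : Ordinal} {I D : Set (Set Ordinal)}
    (hI : IsIdealOn κ I) (hDpos : ∀ A ∈ D, A ∉ I)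
    (hdense : ∀ A : Set Ordinal, A ⊆ Iio κ → A ∉ I → ∃ B ∈ D, B ⊆ A)
    (hclosed : ∀ δ < θ, ∀ Dseq : Ordinal → Set Ordinal,
      (∀ ε, ε < δ → Dseq ε ∈ D) →
      (∀ ε ε', ε ≤ ε' → ε' < δ → Dseq ε' ⊆ Dseq ε) →
      ∃ B ∈ D, ∀ ε, ε < δ → B ⊆ Dseq ε)
    {S : Set Ordinal} (hS : S ⊆ Iio κ) : NonemptyWinsBM θ I S := by
  choose! pick hpickD hpick using hdense
  refine ⟨fun α Sq => pick (Sq α), fun α Sq Sq' h => congrArg pick (h α le_rfl),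
    fun Sq α hα => ⟨?_, ?_⟩⟩
  · intro hlegal
    obtain ⟨hpos, hSqS, -⟩ := hlegal α le_rfl
    exact ⟨hDpos _ (hpickD _ (hSqS.trans hS) hpos), hpick _ (hSqS.trans hS) hpos⟩
  · intro hlegal
    have hpickD_lt ε (hε : ε < α) := hpickD _ ((hlegal ε hε).2.1.trans hS) (hlegal ε hε).1
    have hpick_lt ε (hε : ε < α) := hpick _ ((hlegal ε hε).2.1.trans hS) (hlegal ε hε).1
    have hchain ε ε' (hεε' : ε ≤ ε') (hε' : ε' < α) : pick (Sq ε') ⊆ pick (Sq ε) := by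
      rcases hεε'.eq_or_lt with rfl | hlt
      · exact subset_rfl
      · exact fun x hx => ((hlegal ε' hε').2.2 ε hlt (hpick_lt ε' hε' hx)).2
    obtain ⟨B, hBD, hB⟩ := hclosed α hα _ hpickD_lt hchain
    refine hI.notMem_of_subset (fun x hx => ?_) (hDpos B hBD)
    simp only [InterBelow, mem_iInter, mem_Iio]
    exact fun β hβ => ⟨hpick_lt β hβ (hB β hβ hx), hB β hβ hx⟩

section HistRec

variable {X : Type*}

def RespectsHistory (F : Ordinal → (Ordinal → X) → X) : Prop :=
  ∀ α (s s' : Ordinal → X), (∀ β < α, s β = s' β) → F α s = F α s'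

/-- The sequence `s` with `s α = F α s`; the default `d` stands for the not yet defined
values `s β`, `β ≥ α`, which `F α` ignores when it respects history. -/
def histRec (d : X) (F : Ordinal → (Ordinal → X) → X) : Ordinal → X :=
  Ordinal.lt_wf.fix fun α rec => F α fun β => if h : β < α then rec β h else d

theorem histRec_eq {d : X} {F : Ordinal → (Ordinal → X) → X} (hF : RespectsHistory F)
    (α : Ordinal) : histRec d F α = F α (histRec d F) := by
  rw [histRec, WellFounded.fix_eq]
  exact hF α _ _ fun β hβ => by simp only [dif_pos hβ]

theorem histRec_congr {d : X} {F F' : Ordinal → (Ordinal → X) → X} (hF : RespectsHistory F)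
    (hF' : RespectsHistory F') {α : Ordinal} (h : ∀ β ≤ α, F β = F' β) :
    histRec d F α = histRec d F' α := by
  induction α using WellFoundedLT.induction with
  | ind α ih =>
    rw [histRec_eq hF, histRec_eq hF', h α le_rfl]
    exact hF' α _ _ fun β hβ => ih β hβ fun γ hγ => h γ (hγ.trans hβ.le)

end HistRec

/-- An `I`-positive part of `A` on which `f` is constant, whenever one exists. -/
def homogeneousPart (I : Set (Set Ordinal)) (A : Set Ordinal) (f : Ordinal → Ordinal) :
    Set Ordinal :=
  A ∩ f ⁻¹' {Classical.epsilon fun c => A ∩ f ⁻¹' {c} ∉ I}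

theorem homogeneousPart_subset (I : Set (Set Ordinal)) (A : Set Ordinal)
    (f : Ordinal → Ordinal) : homogeneousPart I A f ⊆ A :=
  inter_subset_left

theorem exists_eq_of_mem_homogeneousPart (I : Set (Set Ordinal)) (A : Set Ordinal)
    (f : Ordinal → Ordinal) : ∃ c, ∀ x ∈ homogeneousPart I A f, f x = c :=
  ⟨_, fun _ hx => hx.2⟩

theorem homogeneousPart_notMem {κ : Ordinal} {I : Set (Set Ordinal)} (hκ : 0 < κ)
    (hI : IsIdealOn κ I) (hN : IsNormalIdeal κ I) {A : Set Ordinal} (hAκ : A ⊆ Iio κ)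
    (hA : A ∉ I) {f : Ordinal → Ordinal} (hf : ∀ β, 0 < β → f β < β) :
    homogeneousPart I A f ∉ I :=
  Classical.epsilon_spec (exists_preimage_singleton_notMem hκ hI hN hAκ hA hf)

section Transfer

variable (I : Set (Set Ordinal)) (S : Set Ordinal)
  (τ : Ordinal → (Ordinal → Set Ordinal) → Set Ordinal)

/-- The moves of empty in a simulated run of `BM_{<θ}(I,S)` against nonempty's strategy `τ`,
while empty plays the regressive functions `g` in `PD_{<θ}(NS,S)`. -/
def simulatedMoves (g : Ordinal → Ordinal → Ordinal) : Ordinal → Set Ordinal :=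
  histRec ∅ fun α s => homogeneousPart I (S ∩ ⋂ β ∈ Iio α, (s β ∩ τ β s)) (g α)

variable {I S τ}

theorem respectsHistory_simulatedMoves
    (hτ : ∀ α (Sq Sq' : Ordinal → Set Ordinal), (∀ β ≤ α, Sq β = Sq' β) → τ α Sq = τ α Sq')
    (g : Ordinal → Ordinal → Ordinal) :
    RespectsHistory fun α s => homogeneousPart I (S ∩ ⋂ β ∈ Iio α, (s β ∩ τ β s)) (g α) := by
  intro α s s' h
  have hτ' : ∀ β < α, s β ∩ τ β s = s' β ∩ τ β s' := fun β hβ => by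
    rw [h β hβ, hτ β s s' fun γ hγ => h γ (hγ.trans_lt hβ)]
  simp only [mem_Iio]
  congr 2
  exact iInter₂_congr hτ'

theorem simulatedMoves_eq
    (hτ : ∀ α (Sq Sq' : Ordinal → Set Ordinal), (∀ β ≤ α, Sq β = Sq' β) → τ α Sq = τ α Sq')
    (g : Ordinal → Ordinal → Ordinal) (α : Ordinal) :
    simulatedMoves I S τ g α =
      homogeneousPart I (S ∩ ⋂ β ∈ Iio α, (simulatedMoves I S τ g β ∩
        τ β (simulatedMoves I S τ g))) (g α) :=
  histRec_eq (respectsHistory_simulatedMoves hτ g) α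

theorem simulatedMoves_congr
    (hτ : ∀ α (Sq Sq' : Ordinal → Set Ordinal), (∀ β ≤ α, Sq β = Sq' β) → τ α Sq = τ α Sq')
    {g g' : Ordinal → Ordinal → Ordinal} {α : Ordinal} (h : ∀ β ≤ α, g β = g' β) :
    simulatedMoves I S τ g α = simulatedMoves I S τ g' α :=
  histRec_congr (respectsHistory_simulatedMoves hτ g) (respectsHistory_simulatedMoves hτ g')
    fun β hβ => by simp only [h β hβ]

theorem simulatedMoves_legal {κ θ : Ordinal} (hκ : 0 < κ) (hI : IsIdealOn κ I)
    (hN : IsNormalIdeal κ I) (hSκ : S ⊆ Iio κ) (hSI : S ∉ I)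
    (hτ : ∀ α (Sq Sq' : Ordinal → Set Ordinal), (∀ β ≤ α, Sq β = Sq' β) → τ α Sq = τ α Sq')
    (hwin : ∀ Sq : Ordinal → Set Ordinal, ∀ α, α < θ →
      (∀ β < α, Sq β ∉ I ∧ Sq β ⊆ S ∧ ∀ γ < β, Sq β ⊆ Sq γ ∩ τ γ Sq) →
        InterBelow (fun β => Sq β ∩ τ β Sq) α ∉ I)
    {g : Ordinal → Ordinal → Ordinal} (hg : ∀ α β, 0 < β → g α β < β) :
    ∀ α < θ, simulatedMoves I S τ g α ∉ I ∧ simulatedMoves I S τ g α ⊆ S ∧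
      ∀ β < α, simulatedMoves I S τ g α ⊆
        simulatedMoves I S τ g β ∩ τ β (simulatedMoves I S τ g) := by
  intro α
  induction α using WellFoundedLT.induction with
  | ind α ih =>
    intro hα
    set Sq := simulatedMoves I S τ g
    have hSqα : Sq α = homogeneousPart I (S ∩ ⋂ β ∈ Iio α, (Sq β ∩ τ β Sq)) (g α) :=
      simulatedMoves_eq hτ g α
    have hlegal β (hβ : β < α) := ih β hβ (hβ.trans hα)
    have hpos : S ∩ ⋂ β ∈ Iio α, (Sq β ∩ τ β Sq) ∉ I := by
      rcases eq_zero_or_pos α with rfl | hα0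
      · simpa using hSI
      · rw [inter_eq_right.2 fun x hx => (hlegal 0 hα0).2.1 (mem_iInter₂.1 hx 0 hα0).1]
        exact hwin Sq α hα hlegal
    have hsub : Sq α ⊆ S ∩ ⋂ β ∈ Iio α, (Sq β ∩ τ β Sq) :=
      hSqα ▸ homogeneousPart_subset _ _ _
    refine ⟨?_, fun x hx => (hsub hx).1, fun β hβ x hx => mem_iInter₂.1 (hsub hx).2 β hβ⟩
    rw [hSqα]
    exact homogeneousPart_notMem hκ hI hN (inter_subset_left.trans hSκ) hpos (hg α)

theorem NonemptyWinsBM.nonemptyWinsPD {κ θ : Ordinal} (hκ : 0 < κ) (hI : FineNormalIdeal κ I)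
    (hSκ : S ⊆ Iio κ) (hSI : S ∉ I) (hBM : NonemptyWinsBM θ I S) :
    NonemptyWinsPD θ (NSIdeal κ) S := by
  obtain ⟨τ, hτ, hwin⟩ := hBM
  refine ⟨fun α g => τ α (simulatedMoves I S τ g), fun α g g' h => ?_, fun g hg α hα => ?_⟩
  · exact hτ α _ _ fun β hβ => simulatedMoves_congr hτ fun γ hγ => h γ (hγ.trans hβ)
  · obtain ⟨c, hc⟩ : ∃ c, ∀ x ∈ simulatedMoves I S τ g α, g α x = c := by
      rw [simulatedMoves_eq hτ]
      exact exists_eq_of_mem_homogeneousPart _ _ _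
    set Sq := simulatedMoves I S τ g
    have hlegal := simulatedMoves_legal hκ hI.1 hI.2.2 hSκ hSI hτ
      (fun Sq α hα => (hwin Sq α hα).2) hg
    obtain ⟨hτpos, hτsub⟩ := (hwin Sq α hα).1 fun β hβ => hlegal β (hβ.trans_lt hα)
    exact ⟨hτsub.trans (hlegal α hα).2.1,
      fun β hβ => hτsub.trans (((hlegal α hα).2.2 β hβ).trans inter_subset_right),
      ⟨c, fun x hx => hc x (hτsub hx)⟩, fun hNS => hτpos (nsIdeal_subset hκ hI hNS)⟩

end Transfer

theorem statement17_general (κ θ : Ordinal) (I : Set (Set Ordinal))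
    (hκ : RegUncountable κ)
    (hI : FineNormalIdeal κ I)
    (D : Set (Set Ordinal))
    (hDpos : ∀ A ∈ D, A ⊆ Set.Iio κ ∧ A ∉ I)
    (hdense : ∀ A : Set Ordinal, A ⊆ Set.Iio κ → A ∉ I → ∃ B ∈ D, B ⊆ A)
    (hclosed : ∀ δ < θ, ∀ Dseq : Ordinal → Set Ordinal,
      (∀ ε, ε < δ → Dseq ε ∈ D) →
      (∀ ε ε', ε ≤ ε' → ε' < δ → Dseq ε' ⊆ Dseq ε) →
      ∃ B ∈ D, ∀ ε, ε < δ → B ⊆ Dseq ε) :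
    ∀ S : Set Ordinal, S ⊆ Set.Iio κ → S ∉ I →
      NonemptyWinsBM θ I S ∧ NonemptyWinsPD θ (NSIdeal κ) S := by
  intro S hSκ hSI
  have hBM : NonemptyWinsBM θ I S :=
    nonemptyWinsBM_of_dense_of_closed hI.1 (fun A hA => (hDpos A hA).2) hdense hclosed hSκ
  exact ⟨hBM, hBM.nonemptyWinsPD hκ.pos hI hSκ hSI⟩

/-- If there is a family `D` of `I`-positive subsets of `κ` that is dense
(every `I`-positive set has a subset in `D`) and `<θ`-closed (every `⊆`-decreasing
sequence of fewer than `θ` members of `D` has a member of `D` below it), then nonempty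
wins `BM_{<θ}(I,S)` for every `I`-positive `S ⊆ κ`, and consequently nonempty wins
`PD_{<θ}(NS,S)`. -/
theorem statement17 (κ θ : Ordinal) (I : Set (Set Ordinal))
    (hκ : RegUncountable κ) (hθ : RegUncountable θ) (hθκ : θ ≤ κ)
    (hI : FineNormalIdeal κ I)
    (D : Set (Set Ordinal))
    (hDpos : ∀ A ∈ D, A ⊆ Set.Iio κ ∧ A ∉ I)
    (hdense : ∀ A : Set Ordinal, A ⊆ Set.Iio κ → A ∉ I → ∃ B ∈ D, B ⊆ A)
    (hclosed : ∀ δ < θ, ∀ Dseq : Ordinal → Set Ordinal,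
      (∀ ε, ε < δ → Dseq ε ∈ D) →
      (∀ ε ε', ε ≤ ε' → ε' < δ → Dseq ε' ⊆ Dseq ε) →
      ∃ B ∈ D, ∀ ε, ε < δ → B ⊆ Dseq ε) :
    ∀ S : Set Ordinal, S ⊆ Set.Iio κ → S ∉ I →
      NonemptyWinsBM θ I S ∧ NonemptyWinsPD θ (NSIdeal κ) S :=
  statement17_general κ θ I hκ hI D hDpos hdense hclosed

end BMPDGames
end
end

section
/- Let κ be strongly inaccessible and θ < κ regular, and let Q = Levy(θ,<κ). Assume p ∈ Q, S is a stationary subset of κ consisting of ordinals of cofinality at least θ, and (q_α)_{α∈S} is a family of conditions in Q with q_α ≤ p for every α ∈ S. Then there exist β < κ, a condition q ∈ Q with dom(q) ⊆ β × θ, and a stationary S' ⊆ S, such that q ≤ p and π_α(q_α) = q for all α ∈ S'. -/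
open Set

noncomputable section

namespace BMPDGames

/-- A condition of the Levy collapse `Levy(θ, <κ)`: a partial function on `κ × θ` of
size `< θ` with `q(α,ξ) < α` for `α > 1` and `q(α,ξ) = 0` for `α ∈ {0,1}`. -/
structure LevyCond (κ θ : Ordinal.{0}) where
  f : Ordinal.{0} × Ordinal.{0} → Option Ordinal.{0}
  dom_lt : ∀ x : Ordinal.{0} × Ordinal.{0}, f x ≠ none → x.1 < κ ∧ x.2 < θ
  dom_small :
    Cardinal.mk {x : Ordinal.{0} × Ordinal.{0} // f x ≠ none} < Cardinal.lift.{1, 0} θ.card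
  val_lt : ∀ (x : Ordinal.{0} × Ordinal.{0}) (v : Ordinal.{0}),
    f x = some v → 1 < x.1 → v < x.1
  val_zero : ∀ (x : Ordinal.{0} × Ordinal.{0}) (v : Ordinal.{0}),
    f x = some v → x.1 ≤ 1 → v = 0

/-- `q ≤ p` in the Levy collapse: `q` extends `p` as a partial function. -/
def LevyLE {κ θ : Ordinal.{0}} (q p : LevyCond κ θ) : Prop :=
  ∀ (x : Ordinal.{0} × Ordinal.{0}) (v : Ordinal.{0}), p.f x = some v → q.f x = some v

/-- `π_α(q) = q ↾ (α × θ)`, the restriction of a Levy condition below `α`. -/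
def levyRestrict {κ θ : Ordinal.{0}} (α : Ordinal.{0}) (q : LevyCond κ θ) :
    Ordinal.{0} × Ordinal.{0} → Option Ordinal.{0} :=
  fun x => if x.1 < α then q.f x else none


/-!
Every `α ∈ S` has cofinality at least `θ > |dom q_α|`, so `dom q_α ∩ (α × θ)` is bounded
below `α`. Pressing down gives one bound `β` on a stationary set, on which the restrictions
`π_α(q_α)` are partial functions from `β × θ` to `β`. There are fewer than `κ` of these since
`κ` is a strong limit, so one of them, `q`, is taken on a stationary set `S'`. As `S'` is
unbounded, each point of `dom p` lies below some `α ∈ S'`, where `q_α` agrees with both `p`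
and `q`; hence `q ≤ p`.
-/

universe u

open scoped Cardinal

section Stationary

variable {κ : Ordinal.{0}} {C S T : Set Ordinal.{0}}

theorem RegUncountable.isSuccLimit (hκ : RegUncountable κ) : Order.IsSuccLimit κ := by
  rw [← hκ.2.2]
  exact Cardinal.isSuccLimit_ord hκ.1.aleph0_le

theorem RegUncountable.cof_eq (hκ : RegUncountable κ) : κ.cof = κ.card := by
  conv_lhs => rw [← hκ.2.2]
  exact hκ.1.cof_ord

theorem isClubIn_Iio (hκ : Order.IsSuccLimit κ) : IsClubIn κ (Iio κ) :=
  ⟨subset_rfl, fun _ _ _ h => h, fun β hβ => ⟨Order.succ β, hκ.succ_lt hβ, Order.lt_succ β⟩⟩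

theorem IsClubIn.inter_Ioi (hC : IsClubIn κ C) {ξ : Ordinal} (hξ : ξ < κ) :
    IsClubIn κ (C ∩ Ioi ξ) := by
  refine ⟨fun x hx => hC.1 hx.1, fun D hD ⟨d, hd⟩ hDκ => ⟨?_, ?_⟩, fun β hβ => ?_⟩
  · exact hC.2.1 D (fun x hx => (hD hx).1) ⟨d, hd⟩ hDκ
  · exact (hD hd).2.trans_le (le_csSup ⟨κ, fun x hx => (hC.1 (hD hx).1).le⟩ hd)
  · obtain ⟨γ, hγC, hγ⟩ := hC.2.2 (max β ξ) (max_lt hβ hξ)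
    exact ⟨γ, ⟨hγC, (le_max_right _ _).trans_lt hγ⟩, (le_max_left _ _).trans_lt hγ⟩

theorem IsStationaryIn.nonempty (hS : IsStationaryIn κ S) (hκ : Order.IsSuccLimit κ) :
    S.Nonempty :=
  (hS.2 _ (isClubIn_Iio hκ)).mono inter_subset_left

theorem IsStationaryIn.mono (hS : IsStationaryIn κ S) (hST : S ⊆ T) (hT : T ⊆ Iio κ) :
    IsStationaryIn κ T :=
  ⟨hT, fun C hC => (hS.2 C hC).mono (inter_subset_inter_left C hST)⟩

theorem IsStationaryIn.exists_gt (hS : IsStationaryIn κ S) (hκ : Order.IsSuccLimit κ)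
    {ξ : Ordinal} (hξ : ξ < κ) : ∃ α ∈ S, ξ < α := by
  obtain ⟨α, hαS, -, hξα⟩ := hS.2 _ ((isClubIn_Iio hκ).inter_Ioi hξ)
  exact ⟨α, hαS, hξα⟩

theorem IsStationaryIn.inter_Ioi (hS : IsStationaryIn κ S) {ξ : Ordinal} (hξ : ξ < κ) :
    IsStationaryIn κ (S ∩ Ioi ξ) := by
  refine ⟨fun x hx => hS.1 hx.1, fun C hC => ?_⟩
  obtain ⟨x, hxS, hxC, hxξ⟩ := hS.2 _ (hC.inter_Ioi hξ)
  exact ⟨x, ⟨hxS, hxξ⟩, hxC⟩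

theorem IsClubIn.sSup_mem_of_cofinal (hC : IsClubIn κ C) {A : Set Ordinal}
    (hA : A.Nonempty) (hAbdd : BddAbove A) (hAκ : sSup A < κ)
    (hcof : ∀ a ∈ A, ∃ c ∈ C, a ≤ c ∧ ∃ a' ∈ A, c ≤ a') : sSup A ∈ C := by
  set D := C ∩ Iic (sSup A)
  have hD : D.Nonempty := by
    obtain ⟨a, ha⟩ := hA
    obtain ⟨c, hc, -, a', ha', hca'⟩ := hcof a ha
    exact ⟨c, hc, hca'.trans (le_csSup hAbdd ha')⟩
  have hsup : sSup D = sSup A := by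
    refine le_antisymm (csSup_le hD fun c hc => hc.2) (csSup_le hA fun a ha => ?_)
    obtain ⟨c, hc, hac, a', ha', hca'⟩ := hcof a ha
    exact hac.trans (le_csSup ⟨sSup A, fun x hx => hx.2⟩ ⟨hc, hca'.trans (le_csSup hAbdd ha')⟩)
  rw [← hsup]
  exact hC.2.1 D inter_subset_left hD (hsup ▸ hAκ)

end Stationary

section PressingDown

variable {κ : Ordinal.{0}} {S : Set Ordinal.{0}}

def diagInter (κ : Ordinal) (C : Ordinal → Set Ordinal) : Set Ordinal :=
  {x | x < κ ∧ ∀ γ < x, x ∈ C γ}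

variable {C : Ordinal → Set Ordinal}

theorem sSup_mem_diagInter (hC : ∀ γ < κ, IsClubIn κ (C γ)) {D : Set Ordinal}
    (hD : D ⊆ diagInter κ C) (hDne : D.Nonempty) (hDκ : sSup D < κ) :
    sSup D ∈ diagInter κ C := by
  have hbdd : BddAbove D := ⟨κ, fun d hd => (hD hd).1.le⟩
  refine ⟨hDκ, fun γ hγ => ?_⟩
  obtain ⟨d₀, hd₀, hγd₀⟩ := (lt_csSup_iff hbdd hDne).1 hγ
  refine (hC γ (hγ.trans hDκ)).sSup_mem_of_cofinal hDne hbdd hDκ fun a ha => ?_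
  have hmax : max a d₀ ∈ D := by rcases max_choice a d₀ with h | h <;> rw [h] <;> assumption
  exact ⟨max a d₀, (hD hmax).2 γ (hγd₀.trans_le (le_max_right _ _)), le_max_left _ _,
    max a d₀, hmax, le_rfl⟩

/-- Iterate `y ↦ sup_{γ < y} next_γ(y)` `ω` times above `β`; the limit `δ` lies in each `C γ`,
`γ < δ`, because `C γ` is cofinal in the iterates. -/
theorem exists_mem_diagInter_gt (hκ : RegUncountable κ) (hC : ∀ γ < κ, IsClubIn κ (C γ))
    {β : Ordinal} (hβ : β < κ) : ∃ δ ∈ diagInter κ C, β < δ := by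
  choose! next hnextC hnext using fun γ (hγ : γ < κ) => (hC γ hγ).2.2
  have hnextκ : ∀ γ < κ, ∀ y < κ, next γ y < κ := fun γ hγ y hy => (hC γ hγ).1 (hnextC γ hγ y hy)
  set F : Ordinal → Ordinal := fun y => max y (⨆ γ : Iio y, next γ y)
  have hFbdd : ∀ y < κ, BddAbove (range fun γ : Iio y => next γ y) := fun y hy =>
    ⟨κ, by rintro _ ⟨γ, rfl⟩; exact (hnextκ γ (γ.2.trans hy) y hy).le⟩
  have hFκ : ∀ y < κ, F y < κ := by
    intro y hy
    refine max_lt hy (Ordinal.lift_iSup_lt_of_lt_cof ?_ fun γ => hnextκ γ (γ.2.trans hy) y hy)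
    rw [← Ordinal.lift_cof, hκ.cof_eq, Cardinal.mk_Iio_ordinal, Cardinal.lift_uzero,
      Cardinal.lift_lt, ← Cardinal.lt_ord, hκ.2.2]
    exact hy
  set g : ℕ → Ordinal := fun n => F^[n] (Order.succ β)
  have hgsucc : ∀ n, g (n + 1) = F (g n) := fun n => Function.iterate_succ_apply' F n _
  have hgκ : ∀ n, g n < κ := by
    intro n
    induction n with
    | zero => exact hκ.isSuccLimit.succ_lt hβ
    | succ n ih => rw [hgsucc]; exact hFκ _ ih
  have hgmono : Monotone g := monotone_nat_of_le_succ fun n => hgsucc n ▸ le_max_left _ _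
  have hgbdd : BddAbove (range g) := ⟨κ, by rintro _ ⟨n, rfl⟩; exact (hgκ n).le⟩
  have hδκ : ⨆ n, g n < κ := Ordinal.iSup_lt_of_lt_cof
    (by rw [hκ.cof_eq, Cardinal.mk_nat]; exact hκ.2.1) hgκ
  refine ⟨⨆ n, g n, ⟨hδκ, fun γ hγ => ?_⟩,
    (Order.lt_succ β).trans_le (le_ciSup hgbdd 0)⟩
  obtain ⟨n, hγn⟩ := (lt_ciSup_iff hgbdd).1 hγ
  refine (hC γ (hγ.trans hδκ)).sSup_mem_of_cofinal (range_nonempty g) hgbdd hδκ ?_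
  rintro _ ⟨k, rfl⟩
  have hγm : γ < g (max k n) := hγn.trans_le (hgmono (le_max_right k n))
  have hγκ : γ < κ := hγm.trans (hgκ _)
  refine ⟨next γ (g (max k n)), hnextC γ hγκ _ (hgκ _),
    (hgmono (le_max_left k n)).trans (hnext γ hγκ _ (hgκ _)).le, g (max k n + 1), ⟨_, rfl⟩, ?_⟩
  rw [hgsucc]
  exact (le_ciSup (hFbdd _ (hgκ _)) ⟨γ, hγm⟩).trans (le_max_right _ _)

theorem isClubIn_diagInter (hκ : RegUncountable κ) (hC : ∀ γ < κ, IsClubIn κ (C γ)) :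
    IsClubIn κ (diagInter κ C) :=
  ⟨fun _ hx => hx.1, fun _ hD hDne hDκ => sSup_mem_diagInter hC hD hDne hDκ,
    fun _ hβ => exists_mem_diagInter_gt hκ hC hβ⟩

/-- Fodor's pressing down lemma. -/
theorem exists_isStationaryIn_fiber_of_regressive (hκ : RegUncountable κ)
    (hS : IsStationaryIn κ S) (f : Ordinal → Ordinal) (hf : ∀ α ∈ S, f α < α) :
    ∃ γ, IsStationaryIn κ {α | α ∈ S ∧ f α = γ} := by
  by_contra! hns
  have hclub : ∀ γ, ∃ C, IsClubIn κ C ∧ ∀ α ∈ C, α ∈ S → f α ≠ γ := by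
    intro γ
    have : ¬ ∀ C, IsClubIn κ C → ({α | α ∈ S ∧ f α = γ} ∩ C).Nonempty :=
      fun h => hns γ ⟨fun α hα => hS.1 hα.1, h⟩
    simp only [not_forall, not_nonempty_iff_eq_empty] at this
    obtain ⟨C, hC, hempty⟩ := this
    exact ⟨C, hC, fun α hαC hαS hfα => hempty.subset ⟨⟨hαS, hfα⟩, hαC⟩⟩
  choose C hC hCS using hclub
  obtain ⟨α, hαS, hαΔ⟩ := hS.2 _ (isClubIn_diagInter hκ fun γ _ => hC γ)
  exact hCS (f α) α (hαΔ.2 _ (hf α hαS)) hαS rfl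

theorem exists_isStationaryIn_fiber_of_lt (hκ : RegUncountable κ) (hS : IsStationaryIn κ S)
    (f : Ordinal → Ordinal) {μ : Ordinal} (hμ : μ < κ) (hf : ∀ α ∈ S, f α < μ) :
    ∃ γ, IsStationaryIn κ {α | α ∈ S ∧ f α = γ} := by
  obtain ⟨γ, hγ⟩ := exists_isStationaryIn_fiber_of_regressive hκ (hS.inter_Ioi hμ) f
    fun α hα => (hf α hα.1).trans hα.2
  exact ⟨γ, hγ.mono (fun α hα => ⟨hα.1.1, hα.2⟩) fun α hα => hS.1 hα.1⟩

theorem exists_isStationaryIn_fiber_of_mk_lt {X : Type u} (hκ : RegUncountable κ)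
    (hS : IsStationaryIn κ S) (f : Ordinal → X) {t : Set X} (hft : ∀ α ∈ S, f α ∈ t)
    (ht : #t < Cardinal.lift.{u} κ.card) :
    ∃ x, IsStationaryIn κ {α | α ∈ S ∧ f α = x} := by
  classical
  obtain ⟨e⟩ : Nonempty (t ↪ Iio κ) := by
    rw [← Cardinal.lift_mk_le', Cardinal.mk_Iio_ordinal, Cardinal.lift_lift]
    simpa using Cardinal.lift_le.{1}.2 ht.le
  set code : Ordinal → Ordinal := fun α => if h : f α ∈ t then e ⟨f α, h⟩ else 0
  have hμ : ⨆ i, (e i : Ordinal) + 1 < κ := by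
    refine Ordinal.lift_iSup_add_one_lt_of_lt_cof ?_ fun i => (e i).2
    rwa [← Ordinal.lift_cof, hκ.cof_eq, Cardinal.lift_uzero]
  have hcode : ∀ α ∈ S, code α < ⨆ i, (e i : Ordinal) + 1 := by
    intro α hα
    have hbdd : BddAbove (range fun i => (e i : Ordinal) + 1) :=
      ⟨κ, by rintro _ ⟨i, rfl⟩; exact Order.add_one_le_of_lt (e i).2⟩
    rw [show code α = e ⟨f α, hft α hα⟩ from dif_pos (hft α hα)]
    exact (lt_add_one _).trans_le (le_ciSup hbdd ⟨f α, hft α hα⟩)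
  obtain ⟨γ, hγ⟩ := exists_isStationaryIn_fiber_of_lt hκ hS code hμ hcode
  obtain ⟨α₀, hα₀S, hα₀γ⟩ := hγ.nonempty hκ.isSuccLimit
  refine ⟨f α₀, hγ.mono ?_ fun α hα => hS.1 hα.1⟩
  rintro α ⟨hαS, hαγ⟩
  have hcodeeq := hαγ.trans hα₀γ.symm
  simp only [code, dif_pos (hft α hαS), dif_pos (hft α₀ hα₀S)] at hcodeeq
  exact ⟨hαS, congrArg Subtype.val (e.injective (Subtype.ext hcodeeq))⟩

end PressingDown

def optionGraph {A B : Type*} (r : A → Option B) : Set (A × B) :=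
  {p | r p.1 = some p.2}

theorem optionGraph_injective {A B : Type*} : Function.Injective (optionGraph (A := A) (B := B)) :=
  fun _ _ h => funext fun a => Option.ext fun b => Set.ext_iff.1 h (a, b)

theorem mk_powerset_Iio_prod_lt {κ β θ : Ordinal.{0}} (hκ : κ.card.IsStrongLimit)
    (hκord : κ.card.ord = κ) (hβ : β < κ) (hθ : θ < κ) :
    #(𝒫 ((Iio β ×ˢ Iio θ) ×ˢ Iio β)) < Cardinal.lift.{1} κ.card := by
  have hlt : ∀ {o}, o < κ → o.card < κ.card := fun ho => Cardinal.lt_ord.1 (hκord.symm ▸ ho)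
  rw [Cardinal.mk_powerset, Cardinal.mk_congr (Equiv.Set.prod _ _), Cardinal.mk_prod,
    Cardinal.mk_congr (Equiv.Set.prod _ _), Cardinal.mk_prod]
  simp only [Cardinal.mk_Iio_ordinal, Cardinal.lift_id, ← Cardinal.lift_mul,
    ← Cardinal.lift_two_power, Cardinal.lift_lt]
  have h0 := hκ.aleph0_le
  exact hκ.isStrongPrelimit (Cardinal.mul_lt_of_lt h0 (Cardinal.mul_lt_of_lt h0 (hlt hβ) (hlt hθ))
    (hlt hβ))

theorem levyRestrict_eq_some {κ θ α v : Ordinal.{0}} {q : LevyCond κ θ}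
    {x : Ordinal × Ordinal} : levyRestrict α q x = some v ↔ x.1 < α ∧ q.f x = some v := by
  unfold levyRestrict
  split_ifs with h <;> simp [h]

theorem levyRestrict_ne_none {κ θ α : Ordinal.{0}} {q : LevyCond κ θ}
    {x : Ordinal × Ordinal} : levyRestrict α q x ≠ none ↔ x.1 < α ∧ q.f x ≠ none := by
  unfold levyRestrict
  split_ifs with h <;> simp [h]

namespace LevyCond

variable {κ θ : Ordinal.{0}} (q : LevyCond κ θ)

def restrict (α : Ordinal) : LevyCond κ θ where
  f := levyRestrict α q
  dom_lt x hx := q.dom_lt x (levyRestrict_ne_none.1 hx).2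
  dom_small := (Cardinal.mk_subtype_mono fun _ hx => (levyRestrict_ne_none.1 hx).2).trans_lt
    q.dom_small
  val_lt x v hx := q.val_lt x v (levyRestrict_eq_some.1 hx).2
  val_zero x v hx := q.val_zero x v (levyRestrict_eq_some.1 hx).2

def domBound (α : Ordinal) : Ordinal :=
  sSup (Prod.fst '' {x | q.f x ≠ none} ∩ Iio α)

theorem domBound_lt {α : Ordinal} (hα : θ.card ≤ α.cof) : q.domBound α < α := by
  refine Ordinal.sSup_lt_of_lt_cof ?_ fun _ h => h.2
  calc #↥(Prod.fst '' {x | q.f x ≠ none} ∩ Iio α)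
      ≤ #↥(Prod.fst '' {x | q.f x ≠ none}) := Cardinal.mk_le_mk_of_subset inter_subset_left
    _ ≤ #{x // q.f x ≠ none} := Cardinal.mk_image_le
    _ < Cardinal.lift θ.card := q.dom_small
    _ ≤ Cardinal.lift α.cof := Cardinal.lift_le.2 hα
    _ = (Ordinal.lift α).cof := Ordinal.lift_cof α

theorem le_domBound {α : Ordinal} {x : Ordinal × Ordinal} (hx : q.f x ≠ none) (hxα : x.1 < α) :
    x.1 ≤ q.domBound α :=
  le_csSup ⟨α, fun _ h => h.2.le⟩ ⟨⟨x, hx, rfl⟩, hxα⟩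

end LevyCond

theorem optionGraph_levyRestrict_subset {κ θ α β : Ordinal.{0}} (q : LevyCond κ θ)
    (hβ : ∀ x, q.f x ≠ none → x.1 < α → x.1 < β) :
    optionGraph (levyRestrict α q) ⊆ (Iio β ×ˢ Iio θ) ×ˢ Iio β := by
  rintro ⟨x, v⟩ hxv
  obtain ⟨hxα, hqx⟩ := levyRestrict_eq_some.1 hxv
  have hx : q.f x ≠ none := by simp [hqx]
  have hxβ := hβ x hx hxα
  refine ⟨⟨hxβ, (q.dom_lt x hx).2⟩, ?_⟩
  rcases lt_or_ge 1 x.1 with h1 | h1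
  · exact (q.val_lt x v hqx h1).trans hxβ
  · exact q.val_zero x v hqx h1 ▸ zero_le.trans_lt hxβ

theorem levyLE_of_levyRestrict_eq {κ θ : Ordinal.{0}} {p q : LevyCond κ θ}
    {qs : Ordinal → LevyCond κ θ} {S : Set Ordinal} (hS : ∀ ξ < κ, ∃ α ∈ S, ξ < α)
    (hqs : ∀ α ∈ S, LevyLE (qs α) p) (hq : ∀ α ∈ S, levyRestrict α (qs α) = q.f) :
    LevyLE q p := by
  intro x v hpx
  obtain ⟨α, hαS, hxα⟩ := hS x.1 (p.dom_lt x (by simp [hpx])).1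
  rw [← hq α hαS, levyRestrict_eq_some]
  exact ⟨hxα, hqs α hαS x v hpx⟩

theorem statement18_general (κ θ : Ordinal.{0})
    (hκreg : κ.card.IsRegular) (hκsl : κ.card.IsStrongLimit) (hκord : κ.card.ord = κ)
    (hθreg : θ.card.IsRegular) (hθκ : θ < κ)
    (S : Set Ordinal.{0}) (hS : IsStationaryIn κ S)
    (hScof : ∀ α ∈ S, θ.card ≤ Ordinal.cof α)
    (p : LevyCond κ θ) (qs : Ordinal.{0} → LevyCond κ θ)
    (hqs : ∀ α ∈ S, LevyLE (qs α) p) :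
    ∃ β < κ, ∃ q : LevyCond κ θ,
      (∀ x : Ordinal.{0} × Ordinal.{0}, q.f x ≠ none → x.1 < β) ∧
      LevyLE q p ∧
      ∃ S' : Set Ordinal.{0}, S' ⊆ S ∧ IsStationaryIn κ S' ∧
        ∀ α ∈ S', levyRestrict α (qs α) = q.f := by
  have hκ : RegUncountable κ :=
    ⟨hκreg, hθreg.aleph0_le.trans_lt (Cardinal.lt_ord.1 (hκord.symm ▸ hθκ)), hκord⟩
  obtain ⟨b, hS₁⟩ := exists_isStationaryIn_fiber_of_regressive hκ hS
    (fun α => (qs α).domBound α) fun α hα => (qs α).domBound_lt (hScof α hα)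
  set S₁ := {α | α ∈ S ∧ (qs α).domBound α = b}
  have hsupp : ∀ α ∈ S₁, ∀ x, (qs α).f x ≠ none → x.1 < α → x.1 < Order.succ b :=
    fun α hα x hx hxα => Order.lt_succ_iff.2 (hα.2 ▸ (qs α).le_domBound hx hxα)
  obtain ⟨α₁, hα₁⟩ := hS₁.nonempty hκ.isSuccLimit
  have hbκ : Order.succ b < κ := hκ.isSuccLimit.succ_lt <|
    hα₁.2 ▸ ((qs α₁).domBound_lt (hScof α₁ hα₁.1)).trans (hS.1 hα₁.1)
  obtain ⟨r, hS'⟩ := exists_isStationaryIn_fiber_of_mk_lt hκ hS₁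
    (fun α => optionGraph (levyRestrict α (qs α)))
    (t := 𝒫 ((Iio (Order.succ b) ×ˢ Iio θ) ×ˢ Iio (Order.succ b)))
    (fun α hα => optionGraph_levyRestrict_subset (qs α) (hsupp α hα))
    (mk_powerset_Iio_prod_lt hκsl hκord hbκ hθκ)
  set S' := {α | α ∈ S₁ ∧ optionGraph (levyRestrict α (qs α)) = r}
  have hS'S : S' ⊆ S := fun α hα => hα.1.1
  obtain ⟨α₀, hα₀⟩ := hS'.nonempty hκ.isSuccLimit
  have hconst : ∀ α ∈ S', levyRestrict α (qs α) = ((qs α₀).restrict α₀).f :=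
    fun α hα => optionGraph_injective (hα.2.trans hα₀.2.symm)
  refine ⟨Order.succ b, hbκ, (qs α₀).restrict α₀, fun x hx => ?_,
    levyLE_of_levyRestrict_eq (fun ξ hξ => hS'.exists_gt hκ.isSuccLimit hξ)
      (fun α hα => hqs α (hS'S hα)) hconst, S', hS'S, hS', hconst⟩
  obtain ⟨hxα₀, hx⟩ := levyRestrict_ne_none.1 hx
  exact hsupp α₀ hα₀.1 x hx hxα₀

/-- Let `κ` be strongly inaccessible, `θ < κ` regular, `Q = Levy(θ,<κ)`,
`p ∈ Q`, `S ⊆ κ` stationary consisting of ordinals of cofinality `≥ θ`, and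
`(q_α)_{α ∈ S}` conditions with `q_α ≤ p`.  Then there are `β < κ`, a condition `q` with
domain contained in `β × θ` and a stationary `S' ⊆ S` such that `q ≤ p` and
`π_α(q_α) = q` for all `α ∈ S'`. -/
theorem statement18 (κ θ : Ordinal.{0})
    (hκreg : κ.card.IsRegular) (hκsl : κ.card.IsStrongLimit) (hκord : κ.card.ord = κ)
    (hθreg : θ.card.IsRegular) (hθord : θ.card.ord = θ) (hθκ : θ < κ)
    (S : Set Ordinal.{0}) (hS : IsStationaryIn κ S)
    (hScof : ∀ α ∈ S, θ.card ≤ Ordinal.cof α)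
    (p : LevyCond κ θ) (qs : Ordinal.{0} → LevyCond κ θ)
    (hqs : ∀ α ∈ S, LevyLE (qs α) p) :
    ∃ β < κ, ∃ q : LevyCond κ θ,
      (∀ x : Ordinal.{0} × Ordinal.{0}, q.f x ≠ none → x.1 < β) ∧
      LevyLE q p ∧
      ∃ S' : Set Ordinal.{0}, S' ⊆ S ∧ IsStationaryIn κ S' ∧
        ∀ α ∈ S', levyRestrict α (qs α) = q.f :=
  statement18_general κ θ hκreg hκsl hκord hθreg hθκ S hS hScof p qs hqs

end BMPDGames
end
end
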